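/- arXiv:0910.3659 — 4 statements merged into one kernel-verified Lean document; each statement's English description precedes it below -/
import Mathlib

section
/- Let V be a finite-dimensional vector space over a field F and let A : V → V be a nilpotent linear operator. Then there exists a unique finite decreasing filtration V^{≥i} (indexed by integers, with V^{≥i} = V for i sufficiently small and V^{≥i} = 0 for i sufficiently large) such that (i) A maps V^{≥i} into V^{≥i+2} for all i, and (ii) for every l ≥ 0, the map A^l induces an isomorphism V^{≥l}/V^{≥l+1} ≅ V^{≥-l}/V^{≥-l+1}. -/
/-- `W` is a Deligne (weight) filtration for the nilpotent operator `A`: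
a decreasing, exhaustive and separated ℤ-indexed filtration such that `A` has
degree `2` and `A ^ l` induces an isomorphism on graded pieces
`W^{≥ -l}/W^{≥ -l+1} ≅ W^{≥ l}/W^{≥ l+1}` for every `l ≥ 0`. -/
def IsDeligneFiltration {F : Type*} [Field F] {V : Type*} [AddCommGroup V] [Module F V]
    (A : Module.End F V) (W : ℤ → Submodule F V) : Prop :=
  -- decreasing
  (∀ i j : ℤ, i ≤ j → W j ≤ W i) ∧
  -- finite: `W i = V` for `i` small enough and `W i = 0` for `i` large enough
  (∃ N : ℤ, (∀ i : ℤ, i ≤ -N → W i = ⊤) ∧ (∀ i : ℤ, N ≤ i → W i = ⊥)) ∧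
  -- `A` has degree 2 with respect to the filtration
  (∀ i : ℤ, (W i).map A ≤ W (i + 2)) ∧
  -- for every `l ≥ 0`, `A ^ l` induces an isomorphism
  -- `W^{≥ -l}/W^{≥ -l+1} ≅ W^{≥ l}/W^{≥ l+1}`:
  (∀ l : ℕ,
    -- surjectivity of the induced map on graded pieces
    (∀ v, v ∈ W (l : ℤ) → ∃ u ∈ W (-(l : ℤ)), v - (A ^ l) u ∈ W ((l : ℤ) + 1)) ∧
    -- injectivity of the induced map on graded pieces
    (∀ u, u ∈ W (-(l : ℤ)) → (A ^ l) u ∈ W ((l : ℤ) + 1) → u ∈ W (-(l : ℤ) + 1)))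

/-!
Induction on the nilpotency order, working throughout with a subquotient `K ⧸ I` of `V`, i.e. with
filtrations of `V` squeezed between `I` and `K`. If `A ^ (n + 2)` kills `K ⧸ I`, the graded
isomorphisms in degrees `l ≥ n + 1` force `W` to be `K` below `-(n + 1)` and `I` above `n + 2`, and
then the one in degree `n + 1` forces `W (-n) = K ⊓ (A ^ (n + 1))⁻¹ I` and
`W (n + 1) = I ⊔ A ^ (n + 1) K`. In between, `W` is a Deligne filtration of `A` on this smaller
subquotient, which `A ^ (n + 1)` already kills; conversely every such filtration extends by `K` and
`I`. Existence and uniqueness both pass through this correspondence.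
-/

open Submodule

theorem Int.eq_of_forall_add_one_eq {α : Type*} {f : ℤ → α} {a : ℤ}
    (h : ∀ j, a ≤ j → f (j + 1) = f j) {i : ℤ} (hi : a ≤ i) : f i = f a :=
  Int.leInduction rfl (fun j hj ih => (h j hj).trans ih) i hi

theorem Int.eq_of_forall_sub_one_eq {α : Type*} {f : ℤ → α} {a : ℤ}
    (h : ∀ j, j ≤ a → f (j - 1) = f j) {i : ℤ} (hi : i ≤ a) : f i = f a :=
  Int.leInductionDown rfl (fun j hj ih => (h j hj).trans ih) i hi

section

variable {R V : Type*} [Ring R] [AddCommGroup V] [Module R V]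

namespace Submodule

variable {A : Module.End R V} {I K : Submodule R V}

theorem le_comap_pow_of_le_comap_pow (hI : I ≤ I.comap A) {n l : ℕ}
    (hn : K ≤ I.comap (A ^ n)) (hl : n ≤ l) : K ≤ I.comap (A ^ l) := by
  intro v hv
  obtain ⟨k, rfl⟩ := Nat.exists_eq_add_of_le' hl
  rw [mem_comap, pow_add, Module.End.mul_apply]
  exact I.le_comap_pow_of_le_comap hI k (hn hv)

theorem inf_comap_pow_le_comap (hK : K ≤ K.comap A) (hI : I ≤ I.comap A) (m : ℕ) :
    K ⊓ I.comap (A ^ m) ≤ (K ⊓ I.comap (A ^ m)).comap A := by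
  rintro v ⟨hvK, hvI⟩
  refine ⟨hK hvK, ?_⟩
  rw [SetLike.mem_coe, mem_comap, ← Module.End.mul_apply, ← (Commute.self_pow A m).eq,
    Module.End.mul_apply]
  exact hI hvI

theorem sup_map_pow_le_comap (hK : K ≤ K.comap A) (hI : I ≤ I.comap A) (m : ℕ) :
    I ⊔ K.map (A ^ m) ≤ (I ⊔ K.map (A ^ m)).comap A := by
  rw [← map_le_iff_le_comap, Submodule.map_sup, ← map_comp, ← Module.End.mul_eq_comp,
    (Commute.self_pow A m).eq, Module.End.mul_eq_comp, map_comp]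
  exact sup_le_sup (map_le_iff_le_comap.mpr hI) (map_mono (map_le_iff_le_comap.mpr hK))

theorem inf_comap_pow_le_comap_sup_map_pow (m : ℕ) :
    K ⊓ I.comap (A ^ m) ≤ (I ⊔ K.map (A ^ m)).comap (A ^ m) :=
  fun _ hv => mem_sup_left hv.2

theorem sup_map_pow_le_inf_comap_pow {n : ℕ} (hIK : I ≤ K) (hK : K ≤ K.comap A)
    (hI : I ≤ I.comap A) (hn : K ≤ I.comap (A ^ (n + 2))) :
    I ⊔ K.map (A ^ (n + 1)) ≤ K ⊓ I.comap (A ^ (n + 1)) := by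
  refine sup_le (le_inf hIK (I.le_comap_pow_of_le_comap hI _)) ?_
  rw [map_le_iff_le_comap]
  intro v hv
  refine ⟨K.le_comap_pow_of_le_comap hK _ hv, ?_⟩
  show (A ^ (n + 1)) ((A ^ (n + 1)) v) ∈ I
  rw [← Module.End.mul_apply, ← pow_add]
  exact le_comap_pow_of_le_comap_pow hI hn (by omega) hv

end Submodule

/-- The Deligne filtration of `A` acting on the subquotient `K ⧸ I`, represented by the
preimages in `V` of its members, so that `I` plays the role of `0` and `K` that of the whole
space. -/
structure IsDeligneFiltrationBetween (A : Module.End R V) (I K : Submodule R V)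
    (W : ℤ → Submodule R V) : Prop where
  antitone : Antitone W
  exists_bound : ∃ N : ℤ, (∀ i, i ≤ -N → W i = K) ∧ ∀ i, N ≤ i → W i = I
  map_le : ∀ i, (W i).map A ≤ W (i + 2)
  exists_sub_pow_mem : ∀ (l : ℕ), ∀ v ∈ W l, ∃ u ∈ W (-l), v - (A ^ l) u ∈ W (l + 1)
  mem_of_pow_mem : ∀ (l : ℕ), ∀ u ∈ W (-l), (A ^ l) u ∈ W (l + 1) → u ∈ W (-l + 1)

namespace IsDeligneFiltrationBetween

variable {A : Module.End R V} {I K : Submodule R V} {W : ℤ → Submodule R V}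
  (hW : IsDeligneFiltrationBetween A I K W)
include hW

theorem le_upper (i : ℤ) : W i ≤ K := by
  obtain ⟨N, hK, -⟩ := hW.exists_bound
  exact hK _ (min_le_right i (-N)) ▸ hW.antitone (min_le_left i (-N))

theorem lower_le (i : ℤ) : I ≤ W i := by
  obtain ⟨N, -, hI⟩ := hW.exists_bound
  exact hI _ (le_max_right i N) ▸ hW.antitone (le_max_left i N)

theorem apply_mem {i : ℤ} {v : V} (hv : v ∈ W i) : A v ∈ W (i + 2) :=
  hW.map_le i (mem_map_of_mem hv)

theorem pow_apply_mem (l : ℕ) {i : ℤ} {v : V} (hv : v ∈ W i) : (A ^ l) v ∈ W (i + 2 * l) := by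
  induction l with
  | zero => simpa using hv
  | succ l ih =>
    rw [pow_succ', Module.End.mul_apply]
    convert hW.apply_mem ih using 2
    push_cast
    ring

theorem lower_le_comap : I ≤ I.comap A := by
  obtain ⟨N, -, hI⟩ := hW.exists_bound
  intro v hv
  rw [← hI N le_rfl] at hv
  simpa [← hI (N + 2) (by omega)] using hW.apply_mem hv

section

variable {l : ℕ} (hK : W (-l) = K) (hI : W (l + 1) = I)
include hK hI

theorem eq_inf_comap_pow : W (-l + 1) = K ⊓ I.comap (A ^ l) := by
  apply le_antisymm
  · intro u hu
    refine ⟨hW.le_upper _ hu, ?_⟩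
    simpa [← hI, show -(l : ℤ) + 1 + 2 * l = l + 1 by ring] using hW.pow_apply_mem l hu
  · rintro u ⟨huK, huI⟩
    exact hW.mem_of_pow_mem l u (hK ▸ huK) (hI ▸ huI)

theorem eq_sup_map_pow : W l = I ⊔ K.map (A ^ l) := by
  apply le_antisymm
  · intro v hv
    obtain ⟨u, hu, hvu⟩ := hW.exists_sub_pow_mem l v hv
    rw [hI] at hvu
    rw [hK] at hu
    simpa using add_mem_sup hvu (mem_map_of_mem (f := A ^ l) hu)
  · refine sup_le (hW.lower_le _) ?_
    rintro _ ⟨u, hu, rfl⟩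
    simpa [show -(l : ℤ) + 2 * l = l by ring] using hW.pow_apply_mem l (hK ▸ hu : u ∈ W (-l))

end

variable {n : ℕ} (hn : K ≤ I.comap (A ^ (n + 1)))
include hn

theorem eq_upper_of_le {i : ℤ} (hi : i ≤ -n) : W i = K := by
  have hstep : ∀ j, j ≤ -(n : ℤ) → W (j - 1) = W j := by
    intro j hj
    refine le_antisymm (fun u hu => ?_) (hW.antitone (by omega))
    obtain ⟨l, hl⟩ : ∃ l : ℕ, (l : ℤ) = 1 - j := ⟨(1 - j).toNat, by omega⟩
    have hAu : (A ^ l) u ∈ W (l + 1) :=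
      hW.lower_le _ <|
        le_comap_pow_of_le_comap_pow hW.lower_le_comap hn (by omega) (hW.le_upper _ hu)
    simpa [hl] using hW.mem_of_pow_mem l u (by simpa [hl] using hu) hAu
  obtain ⟨N, hK, -⟩ := hW.exists_bound
  rw [Int.eq_of_forall_sub_one_eq hstep hi,
    ← Int.eq_of_forall_sub_one_eq hstep (min_le_right (-N) (-n)), hK _ (min_le_left _ _)]

theorem eq_lower_of_le {i : ℤ} (hi : n + 1 ≤ i) : W i = I := by
  have hstep : ∀ j, (n : ℤ) + 1 ≤ j → W (j + 1) = W j := by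
    intro j hj
    refine le_antisymm (hW.antitone (by omega)) (fun v hv => ?_)
    obtain ⟨l, rfl⟩ : ∃ l : ℕ, (l : ℤ) = j := ⟨j.toNat, by omega⟩
    obtain ⟨u, hu, hvu⟩ := hW.exists_sub_pow_mem l v hv
    have hAu : (A ^ l) u ∈ W (l + 1) :=
      hW.lower_le _ <|
        le_comap_pow_of_le_comap_pow hW.lower_le_comap hn (by omega) (hW.le_upper _ hu)
    simpa using add_mem hvu hAu
  obtain ⟨N, -, hI⟩ := hW.exists_bound
  rw [Int.eq_of_forall_add_one_eq hstep hi,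
    ← Int.eq_of_forall_add_one_eq hstep (le_max_left (n + 1 : ℤ) N), hI _ (le_max_right _ _)]

end IsDeligneFiltrationBetween

def extendBetween (I K : Submodule R V) (n : ℕ) (W : ℤ → Submodule R V) (i : ℤ) :
    Submodule R V :=
  if i ≤ -(n + 1 : ℤ) then K else if (n + 2 : ℤ) ≤ i then I else W i

section extendBetween

variable {I K : Submodule R V} {n : ℕ} {W : ℤ → Submodule R V} {i : ℤ}

theorem extendBetween_of_le (hi : i ≤ -(n + 1 : ℤ)) : extendBetween I K n W i = K :=
  if_pos hi

theorem extendBetween_of_ge (hi : (n + 2 : ℤ) ≤ i) : extendBetween I K n W i = I := by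
  rw [extendBetween, if_neg (by omega), if_pos hi]

theorem extendBetween_of_le_of_le (h₁ : -(n : ℤ) ≤ i) (h₂ : i ≤ n + 1) :
    extendBetween I K n W i = W i := by
  rw [extendBetween, if_neg (by omega), if_neg (by omega)]

end extendBetween

namespace IsDeligneFiltrationBetween

variable {A : Module.End R V} {I K : Submodule R V} {W : ℤ → Submodule R V}

theorem restrict (hW : IsDeligneFiltrationBetween A I K W) {n : ℕ}
    (hn : K ≤ I.comap (A ^ (n + 2))) :
    IsDeligneFiltrationBetween A (I ⊔ K.map (A ^ (n + 1))) (K ⊓ I.comap (A ^ (n + 1)))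
      (fun i => W (max (-n) (min i (n + 1)))) := by
  have hK : W (-(n + 1 : ℕ)) = K := hW.eq_upper_of_le hn le_rfl
  have hI : W ((n + 1 : ℕ) + 1) = I := hW.eq_lower_of_le hn le_rfl
  have hK' : W (-n) = K ⊓ I.comap (A ^ (n + 1)) := by
    simpa [neg_add_rev] using hW.eq_inf_comap_pow hK hI
  have hI' : W (n + 1) = I ⊔ K.map (A ^ (n + 1)) := by
    simpa using hW.eq_sup_map_pow hK hI
  have hlow : ∀ i : ℤ, i ≤ -n → max (-n : ℤ) (min i (n + 1)) = -n := by omega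
  have hmid : ∀ i : ℤ, -n ≤ i → i ≤ n + 1 → max (-n : ℤ) (min i (n + 1)) = i := by omega
  have hhigh : ∀ i : ℤ, n + 1 ≤ i → max (-n : ℤ) (min i (n + 1)) = n + 1 := by omega
  refine ⟨fun i j hij => hW.antitone (by omega), ⟨n + 1, fun i hi => ?_, fun i hi => ?_⟩,
    fun i => (hW.map_le _).trans (hW.antitone (by omega)), fun l => ?_, fun l => ?_⟩
  · rwa [hlow i (by omega)]
  · rwa [hhigh i hi]
  all_goals by_cases hl : l ≤ n
  · simpa (disch := omega) only [hmid] using hW.exists_sub_pow_mem l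
  · simp (disch := omega) only [hlow, hhigh]
    exact fun v hv => ⟨0, zero_mem _, by simpa using hv⟩
  · simpa (disch := omega) only [hmid] using hW.mem_of_pow_mem l
  · simp (disch := omega) only [hlow]
    exact fun u hu _ => hu

theorem extendBetween_restrict (hW : IsDeligneFiltrationBetween A I K W) {n : ℕ}
    (hn : K ≤ I.comap (A ^ (n + 2))) :
    extendBetween I K n (fun i => W (max (-n) (min i (n + 1)))) = W := by
  funext i
  rcases le_or_gt i (-(n + 1 : ℤ)) with hi | hi
  · rw [extendBetween_of_le hi, hW.eq_upper_of_le hn (by omega)]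
  rcases le_or_gt (n + 2 : ℤ) i with hi' | hi'
  · rw [extendBetween_of_ge hi', hW.eq_lower_of_le hn (by push_cast; omega)]
  · rw [extendBetween_of_le_of_le (by omega) (by omega)]
    congr 1
    omega

section

variable {n : ℕ}
  (hW : IsDeligneFiltrationBetween A (I ⊔ K.map (A ^ (n + 1))) (K ⊓ I.comap (A ^ (n + 1))) W)
include hW

theorem map_upper_le (hK : K ≤ K.comap A) (hn : K ≤ I.comap (A ^ (n + 2))) :
    K.map A ≤ W (-n + 1) := by
  have hK' := hW.eq_upper_of_le (inf_comap_pow_le_comap_sup_map_pow _) le_rfl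
  have hI' := hW.eq_lower_of_le (inf_comap_pow_le_comap_sup_map_pow _) le_rfl
  rw [hW.eq_inf_comap_pow hK' hI', map_le_iff_le_comap]
  intro v hv
  refine ⟨⟨hK hv, ?_⟩, mem_sup_right ⟨v, hv, ?_⟩⟩
  · rw [SetLike.mem_coe, mem_comap, ← Module.End.mul_apply, ← pow_succ]
    exact hn hv
  · rw [← Module.End.mul_apply, ← pow_succ]

theorem map_le_lower (hI : I ≤ I.comap A) (hn : K ≤ I.comap (A ^ (n + 2))) :
    (W n).map A ≤ I := by
  have hK' := hW.eq_upper_of_le (inf_comap_pow_le_comap_sup_map_pow _) le_rfl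
  have hI' := hW.eq_lower_of_le (inf_comap_pow_le_comap_sup_map_pow _) le_rfl
  rw [hW.eq_sup_map_pow hK' hI', map_le_iff_le_comap]
  refine sup_le (sup_le hI ?_) ?_ <;> rw [map_le_iff_le_comap] <;> intro v hv <;>
    rw [mem_comap, mem_comap, ← Module.End.mul_apply, ← pow_succ']
  · exact hn hv
  · exact hv.2

theorem extend (hIK : I ≤ K) (hK : K ≤ K.comap A) (hI : I ≤ I.comap A)
    (hn : K ≤ I.comap (A ^ (n + 2))) :
    IsDeligneFiltrationBetween A I K (extendBetween I K n W) := by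
  have hWK : ∀ i, W i ≤ K := fun i => (hW.le_upper i).trans inf_le_left
  have hIW : ∀ i, I ≤ W i := fun i => le_sup_left.trans (hW.lower_le i)
  refine ⟨fun i j hij => ?_, ⟨n + 2, fun i hi => extendBetween_of_le (by omega),
    fun i hi => extendBetween_of_ge hi⟩, fun i => ?_, fun l => ?_, fun l => ?_⟩
  · unfold extendBetween
    split_ifs <;> first | omega | exact le_rfl | exact hIK | exact hWK _ | exact hIW _ |
      exact hW.antitone hij
  · rcases le_or_gt (i + 2) (-(n + 1 : ℤ)) with h | h
    · rw [extendBetween_of_le h, extendBetween_of_le (by omega)]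
      exact map_le_iff_le_comap.mpr hK
    rcases le_or_gt (n + 2 : ℤ) (i + 2) with h' | h'
    · rw [extendBetween_of_ge h']
      rcases le_or_gt (n + 2 : ℤ) i with hi | hi
      · rw [extendBetween_of_ge hi]
        exact map_le_iff_le_comap.mpr hI
      · rw [extendBetween_of_le_of_le (by omega) (by omega)]
        exact (map_mono (hW.antitone (by omega))).trans (hW.map_le_lower hI hn)
    · rw [extendBetween_of_le_of_le (i := i + 2) (by omega) (by omega)]
      rcases le_or_gt i (-(n + 1 : ℤ)) with hi | hi
      · rw [extendBetween_of_le hi]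
        exact (hW.map_upper_le hK hn).trans (hW.antitone (by omega))
      · rw [extendBetween_of_le_of_le (by omega) (by omega)]
        exact hW.map_le i
  all_goals
    rcases lt_trichotomy l (n + 1) with hl | rfl | hl <;>
    simp (disch := omega) only [extendBetween_of_le_of_le, extendBetween_of_le, extendBetween_of_ge]
  · exact hW.exists_sub_pow_mem l
  · rw [hW.eq_lower_of_le (inf_comap_pow_le_comap_sup_map_pow _) (by push_cast; omega)]
    intro v hv
    obtain ⟨y, hy, _, ⟨u, hu, rfl⟩, rfl⟩ := mem_sup.mp hv
    exact ⟨u, hu, by simpa using hy⟩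
  · exact fun v hv => ⟨0, zero_mem _, by simpa using hv⟩
  · exact hW.mem_of_pow_mem l
  · rw [hW.eq_upper_of_le (inf_comap_pow_le_comap_sup_map_pow _) (by push_cast; omega)]
    exact fun u hu hAu => ⟨hu, hAu⟩
  · exact fun u hu _ => hu

end

end IsDeligneFiltrationBetween

theorem isDeligneFiltrationBetween_of_le_comap {A : Module.End R V} {I K : Submodule R V}
    (hIK : I ≤ K) (hK : K ≤ I.comap A) :
    IsDeligneFiltrationBetween A I K (fun i => if i ≤ 0 then K else I) := by
  have hle : ∀ i : ℤ, (if i ≤ 0 then K else I) ≤ K := fun i => by split_ifs <;> simp [hIK]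
  have hge : ∀ i : ℤ, I ≤ if i ≤ 0 then K else I := fun i => by split_ifs <;> simp [hIK]
  refine ⟨fun i j hij => ?_, ⟨1, fun i hi => if_pos (by omega), fun i hi => if_neg (by omega)⟩,
    fun i => (map_mono (hle i)).trans ((map_le_iff_le_comap.mpr hK).trans (hge _)),
    fun l => ?_, fun l => ?_⟩
  · by_cases hj : j ≤ 0
    · simp [hj, hij.trans hj]
    · simpa [hj] using hge i
  all_goals
    rcases Nat.eq_zero_or_pos l with rfl | hl
  · exact fun v hv => ⟨v, by simpa using hv, by simp⟩
  · simp only [if_neg (show ¬ (l : ℤ) ≤ 0 by omega), if_neg (show ¬ (l : ℤ) + 1 ≤ 0 by omega)]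
    exact fun v hv => ⟨0, zero_mem _, by simpa using hv⟩
  · simp
  · simp only [if_pos (show -(l : ℤ) ≤ 0 by omega), if_pos (show -(l : ℤ) + 1 ≤ 0 by omega)]
    exact fun u hu _ => hu

theorem existsUnique_isDeligneFiltrationBetween {A : Module.End R V} (n : ℕ) :
    ∀ {I K : Submodule R V}, I ≤ K → K ≤ K.comap A → I ≤ I.comap A →
      K ≤ I.comap (A ^ (n + 1)) → ∃! W, IsDeligneFiltrationBetween A I K W := by
  induction n with
  | zero =>
    intro I K hIK _ _ hn
    refine ⟨_, isDeligneFiltrationBetween_of_le_comap hIK (by simpa using hn),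
      fun W hW => funext fun i => ?_⟩
    split_ifs with hi
    · exact hW.eq_upper_of_le hn (by simpa using hi)
    · exact hW.eq_lower_of_le hn (by omega)
  | succ n ih =>
    intro I K hIK hK hI hn
    obtain ⟨W', hW', huniq⟩ := ih (sup_map_pow_le_inf_comap_pow hIK hK hI hn)
      (inf_comap_pow_le_comap hK hI _) (sup_map_pow_le_comap hK hI _)
      (inf_comap_pow_le_comap_sup_map_pow _)
    refine ⟨_, hW'.extend hIK hK hI hn, fun W hW => ?_⟩
    rw [← hW.extendBetween_restrict hn, huniq _ (hW.restrict hn)]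

end

theorem isDeligneFiltration_iff {F V : Type*} [Field F] [AddCommGroup V] [Module F V]
    {A : Module.End F V} {W : ℤ → Submodule F V} :
    IsDeligneFiltration A W ↔ IsDeligneFiltrationBetween A ⊥ ⊤ W :=
  ⟨fun ⟨hanti, hbound, hmap, hgr⟩ => ⟨fun i j hij => hanti i j hij, hbound, hmap,
      fun l => (hgr l).1, fun l => (hgr l).2⟩,
    fun hW => ⟨fun _ _ hij => hW.antitone hij, hW.exists_bound, hW.map_le,
      fun l => ⟨hW.exists_sub_pow_mem l, hW.mem_of_pow_mem l⟩⟩⟩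

theorem exists_unique_deligne_filtration_general
    (F : Type*) [Field F] (V : Type*) [AddCommGroup V] [Module F V]
    (A : Module.End F V) (hA : IsNilpotent A) :
    ∃! W : ℤ → Submodule F V, IsDeligneFiltration A W := by
  obtain ⟨n, hn⟩ := hA
  simp only [isDeligneFiltration_iff]
  exact existsUnique_isDeligneFiltrationBetween n bot_le (by simp) bot_le
    (by simp [pow_succ, hn])

/-- Deligne: a nilpotent operator on a finite-dimensional vector space admits a
unique Deligne (weight) filtration. -/
theorem exists_unique_deligne_filtration
    (F : Type*) [Field F] (V : Type*) [AddCommGroup V] [Module F V]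
    [FiniteDimensional F V] (A : Module.End F V) (hA : IsNilpotent A) :
    ∃! W : ℤ → Submodule F V, IsDeligneFiltration A W :=
  exists_unique_deligne_filtration_general F V A hA
end

section
/- Let H be an ℓ-group and let π, ρ be smooth admissible representations of H. Then the smooth vectors of Hom_ℂ(π, ρ) under the action (h·φ)(v) = h·φ(h⁻¹v) of H × H (or of H acting on both sides) satisfy Hom_ℂ(π,ρ)^∞ ≅ π̃ ⊗ ρ, where π̃ is the smooth dual of π. -/
/-!
A smooth `φ` is fixed by `K × K` for some compact open subgroup `K` (van Dantzig). Its image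
then lies in the finite-dimensional space `ρ^K`, and its coordinates in a basis of `ρ^K` are
`K`-invariant functionals on `π`, i.e. vectors of `π̃`; so `φ` comes from `π̃ ⊗ ρ^K`.
Injectivity holds already for the full algebraic dual `π^* ⊗ ρ`, and `π̃ ⊗ ρ → π^* ⊗ ρ` is
injective because vector spaces are flat.
-/

open TensorProduct

/-- A representation of a topological group is smooth if every vector has an open
stabilizer. -/
def IsSmoothRep {H V : Type*} [Group H] [TopologicalSpace H]
    [AddCommGroup V] [Module ℂ V] (π : Representation ℂ H V) : Prop :=
  ∀ v : V, IsOpen {g : H | π g v = v}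

/-- The submodule of `K`-invariant vectors. -/
def invariantsSubmodule {H V : Type*} [Group H] [AddCommGroup V] [Module ℂ V]
    (π : Representation ℂ H V) (K : Subgroup H) : Submodule ℂ V where
  carrier := {v | ∀ g ∈ K, π g v = v}
  add_mem' := by intro a b ha hb g hg; simp [map_add, ha g hg, hb g hg]
  zero_mem' := by intro g hg; simp
  smul_mem' := by intro c a ha g hg; simp [ha g hg]

/-- Admissibility: finite-dimensional invariants for every compact open subgroup. -/
def IsAdmissibleRep {H V : Type*} [Group H] [TopologicalSpace H]
    [AddCommGroup V] [Module ℂ V] (π : Representation ℂ H V) : Prop :=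
  ∀ K : Subgroup H, IsOpen (K : Set H) → IsCompact (K : Set H) →
    FiniteDimensional ℂ (invariantsSubmodule π K)

/-- The smooth dual `π̃` of a representation, as a space of linear functionals
fixed by some open subgroup. -/
noncomputable def SmoothDual {H V : Type*} [Group H] [TopologicalSpace H]
    [AddCommGroup V] [Module ℂ V] (π : Representation ℂ H V) :
    Submodule ℂ (V →ₗ[ℂ] ℂ) where
  carrier := {ψ | ∃ U : Subgroup H, IsOpen (U : Set H) ∧ ∀ g ∈ U, ∀ v : V, ψ (π g v) = ψ v}
  add_mem' := by
    rintro ψ χ ⟨U₁, hU₁, h₁⟩ ⟨U₂, hU₂, h₂⟩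
    refine ⟨U₁ ⊓ U₂, by simpa using hU₁.inter hU₂, fun g hg v => ?_⟩
    rcases Subgroup.mem_inf.mp hg with ⟨hg₁, hg₂⟩
    simp [LinearMap.add_apply, h₁ g hg₁ v, h₂ g hg₂ v]
  zero_mem' := ⟨⊤, by simp, fun g _ v => rfl⟩
  smul_mem' := by
    rintro c ψ ⟨U, hU, h⟩
    exact ⟨U, hU, fun g hg v => by simp [h g hg v]⟩

/-- The canonical map `π̃ ⊗ ρ → Hom_ℂ(π, ρ)`, `ψ ⊗ w ↦ (v ↦ ψ(v) • w)`. -/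
noncomputable def dualTensorToHom {H : Type*} [Group H] [TopologicalSpace H]
    {Vπ Vρ : Type*} [AddCommGroup Vπ] [Module ℂ Vπ] [AddCommGroup Vρ] [Module ℂ Vρ]
    (π : Representation ℂ H Vπ) :
    (↥(SmoothDual π) ⊗[ℂ] Vρ) →ₗ[ℂ] (Vπ →ₗ[ℂ] Vρ) :=
  TensorProduct.lift (LinearMap.smulRightₗ.comp (SmoothDual π).subtype)


open Module

section VanDantzig

theorem exists_isCompact_isClopen_mem {X : Type*} [TopologicalSpace X] [LocallyCompactSpace X]
    [T2Space X] [TotallyDisconnectedSpace X] (x : X) :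
    ∃ C : Set X, IsCompact C ∧ IsClopen C ∧ x ∈ C := by
  obtain ⟨s, hs_cpt, hs⟩ := exists_compact_mem_nhds x
  obtain ⟨C, hC_clopen, hxC, hCs⟩ := loc_compact_Haus_tot_disc_of_zero_dim.mem_nhds_iff.mp hs
  exact ⟨C, hs_cpt.of_isClosed_subset hC_clopen.isClosed hCs, hC_clopen, hxC⟩

open scoped Pointwise in
/-- The subgroup is the stabilizer of `C` under left translation: it is open because
`V • C ⊆ C` for a neighbourhood `V` of `1`, and it lies in `C` because `1 ∈ C`. -/
theorem exists_isOpen_subgroup_subset_of_isCompact_of_isOpen {G : Type*} [Group G]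
    [TopologicalSpace G] [IsTopologicalGroup G] {C : Set G} (hC : IsCompact C) (hCo : IsOpen C)
    (h1C : 1 ∈ C) : ∃ K : Subgroup G, IsOpen (K : Set G) ∧ (K : Set G) ⊆ C := by
  obtain ⟨V, hV, hVC⟩ := compact_open_separated_mul_left hC hCo subset_rfl
  have translate_subset : ∀ g ∈ V, g • C ⊆ C := fun g hg =>
    (Set.smul_set_subset_mul hg).trans hVC
  have hK : (V ∩ V⁻¹ : Set G) ⊆ MulAction.stabilizer G C := fun g ⟨hg, hg'⟩ =>
    (translate_subset g hg).antisymm (Set.subset_smul_set_iff.mpr (translate_subset _ hg'))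
  refine ⟨MulAction.stabilizer G C, Subgroup.isOpen_of_mem_nhds _
    (Filter.mem_of_superset (Filter.inter_mem hV (inv_mem_nhds_one G hV)) hK), fun g hg => ?_⟩
  rw [← MulAction.mem_stabilizer_iff.mp hg]
  simpa using Set.smul_mem_smul_set (a := g) h1C

theorem exists_isOpen_isCompact_subgroup_le {G : Type*} [Group G] [TopologicalSpace G]
    [IsTopologicalGroup G] [LocallyCompactSpace G] [TotallyDisconnectedSpace G] [T2Space G]
    {U : Subgroup G} (hU : IsOpen (U : Set G)) :
    ∃ K : Subgroup G, IsOpen (K : Set G) ∧ IsCompact (K : Set G) ∧ K ≤ U := by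
  obtain ⟨C, hC, hC_clopen, h1C⟩ := exists_isCompact_isClopen_mem (1 : G)
  have hCU : IsCompact (C ∩ U) := hC.inter_right (Subgroup.isClosed_of_isOpen U hU)
  obtain ⟨K, hK, hKCU⟩ := exists_isOpen_subgroup_subset_of_isCompact_of_isOpen hCU
    (hC_clopen.isOpen.inter hU) ⟨h1C, U.one_mem⟩
  exact ⟨K, hK, hCU.of_isClosed_subset (Subgroup.isClosed_of_isOpen K hK) hKCU,
    fun g hg => (hKCU hg).2⟩

end VanDantzig

section LinearAlgebra

variable {K M N : Type*} [Field K] [AddCommGroup M] [Module K M] [AddCommGroup N] [Module K N]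

/-- Reduce to a finite-dimensional subspace of `N`, where `dualTensorHom` is bijective, and use
flatness to pass back to `N`. -/
theorem dualTensorHom_injective : Function.Injective (dualTensorHom K M N) := by
  rw [injective_iff_map_eq_zero]
  intro x hx
  obtain ⟨W, _, hxW⟩ :=
    TensorProduct.exists_finite_submodule_right_of_setFinite {x} (Set.finite_singleton x)
  obtain ⟨y, rfl⟩ := hxW rfl
  have hy : W.subtype.compRight K (dualTensorHom K M W y) = 0 := by
    rw [← LinearMap.comp_apply, ← dualTensorHom_comp_lTensor]
    exact hx
  have hy0 : y = 0 := dualTensorHom_bijective_of_finite_projective_right.injective <| by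
    rw [map_zero]
    ext v
    simpa using LinearMap.congr_fun hy v
  rw [hy0, map_zero]

theorem mem_range_dualTensorHom_comp_rTensor_of_finiteDimensional (S : Submodule K (Dual K M))
    {W : Submodule K N} [FiniteDimensional K W] (φ : M →ₗ[K] W) (hS : ∀ ℓ : Dual K W, ℓ ∘ₗ φ ∈ S) :
    W.subtype ∘ₗ φ ∈ LinearMap.range (dualTensorHom K M N ∘ₗ S.subtype.rTensor N) := by
  let b := Module.finBasis K W
  refine ⟨∑ i, (⟨b.coord i ∘ₗ φ, hS _⟩ : S) ⊗ₜ[K] (b i : N), ?_⟩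
  ext v
  simp only [map_sum, LinearMap.coe_comp, Function.comp_apply, LinearMap.rTensor_tmul,
    Submodule.subtype_apply, LinearMap.sum_apply, dualTensorHom_apply, Basis.coord_apply]
  conv_rhs => rw [← b.sum_repr (φ v)]
  simp only [Submodule.coe_sum, Submodule.coe_smul]

end LinearAlgebra

section Representation

variable {H Vπ Vρ : Type*} [Group H] [TopologicalSpace H]
  [AddCommGroup Vπ] [Module ℂ Vπ] [AddCommGroup Vρ] [Module ℂ Vρ]

theorem IsSmoothRep.exists_isOpen_subgroup_fixing {ρ : Representation ℂ H Vρ}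
    (hρ : IsSmoothRep ρ) (w : Vρ) :
    ∃ U : Subgroup H, IsOpen (U : Set H) ∧ ∀ g ∈ U, ρ g w = w :=
  ⟨(MulAction.stabilizer (Module.End ℂ Vρ)ˣ w).comap ρ.toHomUnits, hρ w, fun _ hg => hg⟩

/-- `Hom_ℂ(π, ρ)^∞` for the action of `H × H`. -/
def smoothHom (π : Representation ℂ H Vπ) (ρ : Representation ℂ H Vρ) : Submodule ℂ (Vπ →ₗ[ℂ] Vρ) where
  carrier := {φ | ∃ U : Subgroup H, IsOpen (U : Set H) ∧
    ∀ g ∈ U, ∀ g' ∈ U, ∀ v : Vπ, ρ g' (φ (π g⁻¹ v)) = φ v}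
  add_mem' := by
    rintro φ χ ⟨U₁, hU₁, h₁⟩ ⟨U₂, hU₂, h₂⟩
    refine ⟨U₁ ⊓ U₂, hU₁.inter hU₂, fun g hg g' hg' v => ?_⟩
    simp only [LinearMap.add_apply, map_add, h₁ g hg.1 g' hg'.1, h₂ g hg.2 g' hg'.2]
  zero_mem' := ⟨⊤, isOpen_univ, fun _ _ _ _ _ => by simp⟩
  smul_mem' := by
    rintro c φ ⟨U, hU, h⟩
    exact ⟨U, hU, fun g hg g' hg' v => by simp [h g hg g' hg' v]⟩

variable (π : Representation ℂ H Vπ)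

theorem dualTensorToHom_eq_comp :
    dualTensorToHom π = dualTensorHom ℂ Vπ Vρ ∘ₗ (SmoothDual π).subtype.rTensor Vρ :=
  TensorProduct.ext' fun _ _ => rfl

theorem dualTensorToHom_injective : Function.Injective (dualTensorToHom π (Vρ := Vρ)) := by
  rw [dualTensorToHom_eq_comp, LinearMap.coe_comp]
  exact dualTensorHom_injective.comp
    (Module.Flat.rTensor_preserves_injective_linearMap _ (SmoothDual π).injective_subtype)

theorem range_dualTensorToHom_le_smoothHom {ρ : Representation ℂ H Vρ} (hρ : IsSmoothRep ρ) :
    LinearMap.range (dualTensorToHom π) ≤ smoothHom π ρ := by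
  rintro _ ⟨x, rfl⟩
  induction x using TensorProduct.induction_on with
  | zero => rw [map_zero]; exact zero_mem _
  | add x y hx hy => rw [map_add]; exact add_mem hx hy
  | tmul ψ w =>
    obtain ⟨U₁, hU₁, hψ⟩ := ψ.2
    obtain ⟨U₂, hU₂, hw⟩ := hρ.exists_isOpen_subgroup_fixing w
    refine ⟨U₁ ⊓ U₂, hU₁.inter hU₂, fun g hg g' hg' v => ?_⟩
    simp [dualTensorToHom, hψ g⁻¹ (inv_mem hg.1) v, hw g' hg'.2]

theorem smoothHom_le_range_dualTensorToHom [IsTopologicalGroup H] [LocallyCompactSpace H]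
    [TotallyDisconnectedSpace H] [T2Space H] {ρ : Representation ℂ H Vρ}
    (hρ : IsAdmissibleRep ρ) : smoothHom π ρ ≤ LinearMap.range (dualTensorToHom π) := by
  rintro φ ⟨U, hU, hφ⟩
  obtain ⟨K, hK, hK_cpt, hKU⟩ := exists_isOpen_isCompact_subgroup_le hU
  have : FiniteDimensional ℂ (invariantsSubmodule ρ K) := hρ K hK hK_cpt
  have hφ_mem : ∀ v, φ v ∈ invariantsSubmodule ρ K := fun v g hg => by
    simpa using hφ 1 U.one_mem g (hKU hg) v
  have hφ_inv : ∀ g ∈ K, ∀ v, φ (π g v) = φ v := fun g hg v => by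
    simpa using hφ g⁻¹ (inv_mem (hKU hg)) 1 U.one_mem v
  rw [dualTensorToHom_eq_comp]
  refine mem_range_dualTensorHom_comp_rTensor_of_finiteDimensional _ (φ.codRestrict _ hφ_mem)
    fun ℓ => ⟨K, hK, fun g hg v => congrArg ℓ (Subtype.ext (hφ_inv g hg v))⟩

end Representation

theorem smooth_hom_eq_dual_tensor_general
    (H : Type*) [Group H] [TopologicalSpace H] [IsTopologicalGroup H]
    [LocallyCompactSpace H] [TotallyDisconnectedSpace H] [T2Space H]
    (Vπ Vρ : Type*) [AddCommGroup Vπ] [Module ℂ Vπ] [AddCommGroup Vρ] [Module ℂ Vρ]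
    (π : Representation ℂ H Vπ) (ρ : Representation ℂ H Vρ)
    (hρs : IsSmoothRep ρ) (hρa : IsAdmissibleRep ρ) :
    Function.Injective (dualTensorToHom π (Vρ := Vρ)) ∧
    (∀ φ : Vπ →ₗ[ℂ] Vρ,
      (φ ∈ LinearMap.range (dualTensorToHom π (Vρ := Vρ))) ↔
      -- `φ` is a smooth vector of `Hom_ℂ(π, ρ)` for the `H × H`-action
      (∃ U : Subgroup H, IsOpen (U : Set H) ∧
        ∀ g ∈ U, ∀ g' ∈ U, ∀ v : Vπ, ρ g' (φ (π g⁻¹ v)) = φ v)) :=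
  ⟨dualTensorToHom_injective π, fun _ =>
    ⟨fun h => range_dualTensorToHom_le_smoothHom π hρs h,
      fun h => smoothHom_le_range_dualTensorToHom π hρa h⟩⟩

/-- Corollary A.7: for smooth admissible representations `π`, `ρ` of an ℓ-group `H`,
the smooth vectors of `Hom_ℂ(π, ρ)` under the `H × H`-action
`((g₁,g₂)·φ)(v) = ρ(g₂) φ(π(g₁)⁻¹ v)` are exactly `π̃ ⊗ ρ`: the canonical map
`π̃ ⊗ ρ → Hom_ℂ(π, ρ)` is injective with image the smooth vectors. -/
theorem smooth_hom_eq_dual_tensor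
    (H : Type*) [Group H] [TopologicalSpace H] [IsTopologicalGroup H]
    [LocallyCompactSpace H] [TotallyDisconnectedSpace H] [T2Space H]
    (Vπ Vρ : Type*) [AddCommGroup Vπ] [Module ℂ Vπ] [AddCommGroup Vρ] [Module ℂ Vρ]
    (π : Representation ℂ H Vπ) (ρ : Representation ℂ H Vρ)
    (hπs : IsSmoothRep π) (hρs : IsSmoothRep ρ)
    (hπa : IsAdmissibleRep π) (hρa : IsAdmissibleRep ρ) :
    Function.Injective (dualTensorToHom π (Vρ := Vρ)) ∧
    (∀ φ : Vπ →ₗ[ℂ] Vρ,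
      (φ ∈ LinearMap.range (dualTensorToHom π (Vρ := Vρ))) ↔
      -- `φ` is a smooth vector of `Hom_ℂ(π, ρ)` for the `H × H`-action
      (∃ U : Subgroup H, IsOpen (U : Set H) ∧
        ∀ g ∈ U, ∀ g' ∈ U, ∀ v : Vπ, ρ g' (φ (π g⁻¹ v)) = φ v)) :=
  smooth_hom_eq_dual_tensor_general H Vπ Vρ π ρ hρs hρa
end

section
/- Every permutation σ ∈ S_{n+2} is conjugate to its inverse σ⁻¹ by an element of the subgroup S_n × S_2 (permutations preserving {1,…,n} and {n+1,n+2}). -/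
/-!
On a single cycle of `σ`, with base point `b` and any second point `c`, the map
`σ ^ i b ↦ σ ^ (-i) c` is a well-defined involution that reverses `σ` and swaps `b` and `c`.
Doing this on every cycle gives an involution `τ` with `τ σ τ⁻¹ = σ⁻¹`. Taking `b = n+1` and
`c = n+2` on their common cycle if they share one, and `b = c` equal to each of them on their
own cycles otherwise, `τ` preserves `{n+1, n+2}`, hence also `{1, …, n}`, so it lies in
`S_n × S_2`.
-/

namespace Equiv.Perm

variable {α : Type*} {σ : Perm α}

theorem zpow_neg_apply_eq_of_zpow_apply_eq {a b : α} (hab : σ.SameCycle a b) {i j : ℤ}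
    (h : (σ ^ i) a = (σ ^ j) a) : (σ ^ (-i)) b = (σ ^ (-j)) b := by
  have ha : (σ ^ (-i)) a = (σ ^ (-j)) a :=
    calc (σ ^ (-i)) a = (σ ^ (-i - j)) ((σ ^ j) a) := by rw [← mul_apply, ← zpow_add]; ring_nf
      _ = (σ ^ (-i - j)) ((σ ^ i) a) := by rw [h]
      _ = (σ ^ (-j)) a := by rw [← mul_apply, ← zpow_add]; ring_nf
  obtain ⟨m, rfl⟩ := hab
  rw [← mul_apply, ← zpow_add, add_comm, zpow_add, mul_apply, ha, ← mul_apply, ← zpow_add,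
    add_comm, zpow_add, mul_apply]

section CycleReflection

variable {b c : Quotient (SameCycle.setoid σ) → α}

/-- On each cycle `q` of `σ`, the reflection `σ ^ i (b q) ↦ σ ^ (-i) (c q)`. -/
noncomputable def cycleReflection (b c : Quotient (SameCycle.setoid σ) → α)
    (hb : ∀ q, Quotient.mk _ (b q) = q) (z : α) : α :=
  (σ ^ (-(Quotient.exact (hb (Quotient.mk _ z)) : σ.SameCycle _ z).choose)) (c (Quotient.mk _ z))

variable (hb : ∀ q, Quotient.mk _ (b q) = q)

theorem cycleReflection_eq (hc : ∀ q, Quotient.mk _ (c q) = q) {z : α} {i : ℤ}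
    (h : (σ ^ i) (b (Quotient.mk _ z)) = z) :
    cycleReflection b c hb z = (σ ^ (-i)) (c (Quotient.mk _ z)) :=
  zpow_neg_apply_eq_of_zpow_apply_eq (Quotient.exact ((hb _).trans (hc _).symm))
    ((Quotient.exact (hb (Quotient.mk _ z)) : σ.SameCycle _ z).choose_spec.trans h.symm)

theorem mk_cycleReflection (hc : ∀ q, Quotient.mk _ (c q) = q) (z : α) :
    Quotient.mk (SameCycle.setoid σ) (cycleReflection b c hb z) = Quotient.mk _ z :=
  (Quotient.sound (⟨_, rfl⟩ : σ.SameCycle _ _)).symm.trans (hc _)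

theorem cycleReflection_perm_apply (hc : ∀ q, Quotient.mk _ (c q) = q) (z : α) :
    cycleReflection b c hb (σ z) = σ⁻¹ (cycleReflection b c hb z) := by
  have hσz : Quotient.mk (SameCycle.setoid σ) (σ z) = Quotient.mk _ z :=
    Quotient.sound (SameCycle.refl σ z).apply_left
  obtain ⟨j, hj⟩ := (Quotient.exact (hb (Quotient.mk _ z)) : σ.SameCycle _ z)
  rw [cycleReflection_eq hb hc (i := 1 + j) (by rw [hσz, zpow_add, zpow_one, mul_apply, hj]),
    cycleReflection_eq hb hc hj, hσz, neg_add, zpow_add, zpow_neg_one, mul_apply]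

theorem cycleReflection_involutive (hc : ∀ q, Quotient.mk _ (c q) = q) :
    Function.Involutive (cycleReflection b c hb) := by
  intro z
  obtain ⟨j, hj⟩ := (Quotient.exact (hb (Quotient.mk _ z)) : σ.SameCycle _ z)
  obtain ⟨m, hm⟩ := (Quotient.exact ((hb (Quotient.mk _ z)).trans (hc _).symm) : σ.SameCycle _ _)
  have hτz := cycleReflection_eq hb hc hj
  rw [← hm, ← mul_apply, ← zpow_add] at hτz
  rw [cycleReflection_eq hb hc (i := -j + m) (by rw [mk_cycleReflection hb hc, hτz]),
    mk_cycleReflection hb hc, ← hm, ← mul_apply, ← zpow_add, show -(-j + m) + m = j by ring, hj]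

theorem cycleReflection_apply_section (hc : ∀ q, Quotient.mk _ (c q) = q)
    (q : Quotient (SameCycle.setoid σ)) : cycleReflection b c hb (b q) = c q := by
  rw [cycleReflection_eq hb hc (i := 0) (by rw [hb, zpow_zero, one_apply]), hb, neg_zero,
    zpow_zero, one_apply]

theorem exists_conj_eq_inv_and_swap_sections (hb : ∀ q, Quotient.mk _ (b q) = q)
    (hc : ∀ q, Quotient.mk _ (c q) = q) :
    ∃ τ : Perm α, τ * σ * τ⁻¹ = σ⁻¹ ∧ ∀ q, τ (b q) = c q ∧ τ (c q) = b q := by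
  have hτ := cycleReflection_involutive hb hc
  refine ⟨hτ.toPerm, ?_, fun q => ⟨cycleReflection_apply_section hb hc q, ?_⟩⟩
  · ext z
    rw [mul_apply, mul_apply, inv_def, hτ.toPerm_symm, hτ.coe_toPerm,
      cycleReflection_perm_apply hb hc, hτ]
  · rw [← cycleReflection_apply_section hb hc q]
    exact hτ _

end CycleReflection

theorem exists_conj_eq_inv_mapsTo_pair (σ : Perm α) (x y : α) :
    ∃ τ : Perm α, τ * σ * τ⁻¹ = σ⁻¹ ∧ Set.MapsTo τ {x, y} {x, y} := by
  classical
  let b (q : Quotient (SameCycle.setoid σ)) : α :=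
    if q = Quotient.mk _ x then x else if q = Quotient.mk _ y then y else q.out
  let c (q : Quotient (SameCycle.setoid σ)) : α := if q = Quotient.mk _ y then y else b q
  have hb : ∀ q, Quotient.mk _ (b q) = q := by
    intro q; dsimp only [b]; split_ifs <;> simp_all
  have hc : ∀ q, Quotient.mk _ (c q) = q := by
    intro q; dsimp only [c]; split_ifs <;> simp_all
  obtain ⟨τ, hconj, hswap⟩ := exists_conj_eq_inv_and_swap_sections hb hc
  refine ⟨τ, hconj, ?_⟩
  by_cases hxy : Quotient.mk (SameCycle.setoid σ) x = Quotient.mk _ y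
  · have hswap_y := hswap (Quotient.mk _ y)
    rw [show b (Quotient.mk _ y) = x by simp [b, hxy], show c (Quotient.mk _ y) = y by simp [c]]
      at hswap_y
    rintro _ (rfl | rfl) <;> simp [hswap_y]
  · have hswap_x := (hswap (Quotient.mk _ x)).1
    have hswap_y := (hswap (Quotient.mk _ y)).1
    rw [show b (Quotient.mk _ x) = x by simp [b],
      show c (Quotient.mk _ x) = x by simp [c, b, hxy]] at hswap_x
    rw [show b (Quotient.mk _ y) = y by simp [b, Ne.symm hxy],
      show c (Quotient.mk _ y) = y by simp [c]] at hswap_y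
    rintro _ (rfl | rfl) <;> simp [hswap_x, hswap_y]

end Equiv.Perm

/-- Every permutation of `{1,…,n+2}` is conjugate to its inverse by an element of
the subgroup `S_n × S_2` (permutations preserving the two blocks). -/
theorem perm_conj_inv_by_block_subgroup
    (n : ℕ) (σ : Equiv.Perm (Sum (Fin n) (Fin 2))) :
    ∃ (a : Equiv.Perm (Fin n)) (b : Equiv.Perm (Fin 2)),
      (Equiv.Perm.sumCongrHom (Fin n) (Fin 2) (a, b)) * σ *
        (Equiv.Perm.sumCongrHom (Fin n) (Fin 2) (a, b))⁻¹ = σ⁻¹ := by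
  obtain ⟨τ, hconj, hτ⟩ := Equiv.Perm.exists_conj_eq_inv_mapsTo_pair σ (Sum.inr 0) (Sum.inr 1)
  have hrange : Set.range (Sum.inr : Fin 2 → Fin n ⊕ Fin 2) = {Sum.inr 0, Sum.inr 1} := by
    ext z; simp [Fin.exists_fin_two, eq_comm]
  rw [← hrange, ← Equiv.Perm.perm_mapsTo_inl_iff_mapsTo_inr] at hτ
  obtain ⟨⟨a, b⟩, hab⟩ := Equiv.Perm.mem_sumCongrHom_range_of_perm_mapsTo_inl hτ
  exact ⟨a, b, hab ▸ hconj⟩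
end

section
/- Let l ≥ 3 and n₁,…,n_l ≥ 1, with G' = S_{n₁+⋯+n_l} and M' = S_{n₁} × ⋯ × S_{n_l}. Then the convolution algebra of Ad(M')-invariant complex-valued functions on G' is not commutative; specifically, the characteristic functions of the M'-conjugacy classes of the transpositions σ₁ = (1, n₁+1) and σ₂ = (n₁+1, n₁+n₂+1) do not commute under convolution. Consequently (G', M') is not a strong Gelfand pair. -/
open scoped BigOperators

/-- Convolution of complex-valued functions on a finite group. -/
noncomputable def convol {G : Type*} [Group G] [Fintype G] (f g : G → ℂ) : G → ℂ :=
  fun x => ∑ y : G, f y * g (y⁻¹ * x)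

/-!
Put `x₀ = (a b)(b c)` and let `f₁`, `f₂` be the indicators of the `M'`-classes of `(a b)` and
`(b c)`; these classes consist of the transpositions `(u v)` with `u, v` in the blocks of `a, b`,
resp. `b, c`. Then `(f₁ * f₂)(x₀)` counts factorisations `x₀ = (u v)(u' v')` with `u ~ a`,
`v ~ b ~ u'`, `v' ~ c`, and `(f₂ * f₁)(x₀)` those with `u ~ b ~ v'`, `v ~ c`, `u' ~ a`, where
`~` means "in the same block". Since `a, b, c` lie in distinct blocks, following the point `c`
(which `x₀` sends to `a`) rules out the second kind of factorisation and, together with `b`,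
forces the first to be `(a b)(b c)`; so the two convolutions are `1` and `0` at `x₀`.
-/

open Equiv

section ConjClassIn

variable {G : Type*} [Group G]

def conjClassIn (H : Subgroup G) (g : G) : Set G :=
  {x | ∃ m ∈ H, m * g * m⁻¹ = x}

variable {H : Subgroup G}

theorem mem_conjClassIn_self (g : G) : g ∈ conjClassIn H g :=
  ⟨1, H.one_mem, by group⟩

theorem conj_mem_conjClassIn_iff {m : G} (hm : m ∈ H) {g x : G} :
    m * x * m⁻¹ ∈ conjClassIn H g ↔ x ∈ conjClassIn H g := by
  constructor
  · rintro ⟨k, hk, hkx⟩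
    refine ⟨m⁻¹ * k, H.mul_mem (H.inv_mem hm) hk, ?_⟩
    calc m⁻¹ * k * g * (m⁻¹ * k)⁻¹ = m⁻¹ * (k * g * k⁻¹) * m := by group
      _ = x := by rw [hkx]; group
  · rintro ⟨k, hk, rfl⟩
    exact ⟨m * k, H.mul_mem hm hk, by group⟩

theorem indicator_conjClassIn_conj {M : Type*} [Zero M] (c : M) {m : G} (hm : m ∈ H)
    (g x : G) :
    (conjClassIn H g).indicator (fun _ => c) (m * x * m⁻¹) =
      (conjClassIn H g).indicator (fun _ => c) x := by
  by_cases hx : x ∈ conjClassIn H g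
  · rw [Set.indicator_of_mem hx, Set.indicator_of_mem ((conj_mem_conjClassIn_iff hm).2 hx)]
  · rw [Set.indicator_of_notMem hx,
      Set.indicator_of_notMem (mt (conj_mem_conjClassIn_iff hm).1 hx)]

theorem indicator_conjClassIn_ne_zero {M : Type*} [Zero M] {c : M} (hc : c ≠ 0) (g : G) :
    (conjClassIn H g).indicator (fun _ => c) ≠ 0 := fun h =>
  hc (by simpa [Set.indicator_of_mem (mem_conjClassIn_self g)] using congrFun h g)

end ConjClassIn

theorem convol_indicator_one_apply {G : Type*} [Group G] [Fintype G] (S T : Set G) (x : G) :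
    convol (S.indicator fun _ => 1) (T.indicator fun _ => 1) x =
      ({y | y ∈ S ∧ y⁻¹ * x ∈ T} : Set G).ncard := by
  classical
  rw [Set.ncard_eq_toFinset_card', Set.toFinset_ofPred, convol, Finset.card_filter]
  push_cast
  refine Finset.sum_congr rfl fun y _ => ?_
  simp only [Set.indicator_apply]
  split_ifs <;> simp_all

section Blocks

variable {α ι : Type*} [DecidableEq α] {blk : α → ι}

-- For `blk = Sigma.fst` this is the block subgroup `M' = S_{n₁} × ⋯ × S_{n_l}`.
def blockPerm (blk : α → ι) : Subgroup (Perm α) where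
  carrier := {m | ∀ p, blk (m p) = blk p}
  mul_mem' hm hm' p := by rw [Perm.mul_apply, hm, hm']
  one_mem' _ := rfl
  inv_mem' {m} hm p := by simpa using (hm (m⁻¹ p)).symm

theorem exists_swap_of_mem_conjClassIn_swap {u v : α} {x : Perm α}
    (hx : x ∈ conjClassIn (blockPerm blk) (swap u v)) :
    ∃ u' v', blk u' = blk u ∧ blk v' = blk v ∧ x = swap u' v' := by
  obtain ⟨m, hm, rfl⟩ := hx
  exact ⟨m u, m v, hm u, hm v, (swap_apply_apply m u v).symm⟩

variable {a b c : α} (hab : blk a ≠ blk b) (hbc : blk b ≠ blk c) (hac : blk a ≠ blk c)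
include hab hbc hac

theorem eq_of_swap_mul_swap_eq {u v u' v' : α} (hu : blk u = blk a) (hv : blk v = blk b)
    (hu' : blk u' = blk b) (hv' : blk v' = blk c)
    (h : swap u v * swap u' v' = swap a b * swap b c) : u = a ∧ v = b := by
  have hc : swap u v (swap u' v' c) = a := by simpa using congrArg (· c) h
  have hcu : c ≠ u := ne_of_apply_ne blk (by rw [hu]; exact hac.symm)
  have hcv : c ≠ v := ne_of_apply_ne blk (by rw [hv]; exact hbc.symm)
  have hcu' : c ≠ u' := ne_of_apply_ne blk (by rw [hu']; exact hbc.symm)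
  have hu'u : u' ≠ u := ne_of_apply_ne blk (by rw [hu', hu]; exact hab.symm)
  obtain rfl : c = v' := by
    by_contra hcv'
    rw [swap_apply_of_ne_of_ne hcu' hcv', swap_apply_of_ne_of_ne hcu hcv] at hc
    exact hac (by rw [hc])
  rw [swap_apply_right] at hc
  obtain rfl : v = u' := by
    by_contra hvu'
    rw [swap_apply_of_ne_of_ne hu'u (Ne.symm hvu')] at hc
    exact hab (by rw [← hc, hu'])
  rw [swap_apply_right] at hc
  obtain rfl := hc.symm
  refine ⟨rfl, ?_⟩
  by_contra hvb
  have hba : b ≠ a := ne_of_apply_ne blk hab.symm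
  have hbc' : b ≠ c := ne_of_apply_ne blk hbc
  have hb : swap a v (swap v c b) = c := by
    simpa [swap_apply_of_ne_of_ne hcu hbc'.symm] using congrArg (· b) h
  rw [swap_apply_of_ne_of_ne (Ne.symm hvb) hbc', swap_apply_of_ne_of_ne hba (Ne.symm hvb)] at hb
  exact hbc' hb

theorem swap_mul_swap_ne {u v u' v' : α} (hu : blk u = blk b) (hv : blk v = blk c)
    (hu' : blk u' = blk a) (hv' : blk v' = blk b) :
    swap u v * swap u' v' ≠ swap a b * swap b c := by
  intro h
  have hc : swap u v (swap u' v' c) = a := by simpa using congrArg (· c) h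
  have hcu : c ≠ u := ne_of_apply_ne blk (by rw [hu]; exact hbc.symm)
  have hcu' : c ≠ u' := ne_of_apply_ne blk (by rw [hu']; exact hac.symm)
  have hcv' : c ≠ v' := ne_of_apply_ne blk (by rw [hv']; exact hbc.symm)
  rw [swap_apply_of_ne_of_ne hcu' hcv'] at hc
  rcases eq_or_ne c v with rfl | hcv
  · rw [swap_apply_right] at hc
    exact hab (by rw [← hc, hu])
  · rw [swap_apply_of_ne_of_ne hcu hcv] at hc
    exact hac (by rw [hc])

theorem convol_indicator_conjClassIn_swap_ne [Fintype α] :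
    convol ((conjClassIn (blockPerm blk) (swap a b)).indicator fun _ => 1)
        ((conjClassIn (blockPerm blk) (swap b c)).indicator fun _ => 1) ≠
      convol ((conjClassIn (blockPerm blk) (swap b c)).indicator fun _ => 1)
        ((conjClassIn (blockPerm blk) (swap a b)).indicator fun _ => 1) := by
  intro h
  have hx := congrFun h (swap a b * swap b c)
  have hab_bc : {y | y ∈ conjClassIn (blockPerm blk) (swap a b) ∧
      y⁻¹ * (swap a b * swap b c) ∈ conjClassIn (blockPerm blk) (swap b c)} = {swap a b} := by
    ext y
    refine ⟨fun ⟨hy, hy'⟩ => ?_, ?_⟩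
    · obtain ⟨u, v, hu, hv, rfl⟩ := exists_swap_of_mem_conjClassIn_swap hy
      obtain ⟨u', v', hu', hv', hyx⟩ := exists_swap_of_mem_conjClassIn_swap hy'
      obtain ⟨rfl, rfl⟩ :=
        eq_of_swap_mul_swap_eq hab hbc hac hu hv hu' hv' (by rw [← hyx, mul_inv_cancel_left])
      rfl
    · rintro rfl
      exact ⟨mem_conjClassIn_self _, by rw [inv_mul_cancel_left]; exact mem_conjClassIn_self _⟩
  have hbc_ab : {y | y ∈ conjClassIn (blockPerm blk) (swap b c) ∧
      y⁻¹ * (swap a b * swap b c) ∈ conjClassIn (blockPerm blk) (swap a b)} = ∅ := by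
    refine Set.eq_empty_of_forall_notMem fun y ⟨hy, hy'⟩ => ?_
    obtain ⟨u, v, hu, hv, rfl⟩ := exists_swap_of_mem_conjClassIn_swap hy
    obtain ⟨u', v', hu', hv', hyx⟩ := exists_swap_of_mem_conjClassIn_swap hy'
    exact swap_mul_swap_ne hab hbc hac hu hv hu' hv' (by rw [← hyx, mul_inv_cancel_left])
  rw [convol_indicator_one_apply, convol_indicator_one_apply, hab_bc, hbc_ab,
    Set.ncard_singleton, Set.ncard_empty] at hx
  norm_num at hx

end Blocks

theorem blocks_not_strong_gelfand_general
    (l : ℕ) (n : Fin l → ℕ)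
    (a b c : (i : Fin l) × Fin (n i))
    (hab : a.1 ≠ b.1) (hbc : b.1 ≠ c.1) (hac : a.1 ≠ c.1) :
    -- `f₁`, `f₂` are the characteristic functions of the `M'`-conjugacy classes of
    -- the transpositions `(a b)` and `(b c)`.
    (Set.indicator
        {x : Equiv.Perm ((i : Fin l) × Fin (n i)) |
          ∃ m : Equiv.Perm ((i : Fin l) × Fin (n i)),
            (∀ p, (m p).1 = p.1) ∧ m * Equiv.swap a b * m⁻¹ = x}
        (fun _ => (1 : ℂ)) ≠ 0) ∧
    -- they are `Ad(M')`-invariant, and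
    (∀ m : Equiv.Perm ((i : Fin l) × Fin (n i)), (∀ p, (m p).1 = p.1) →
      ∀ x, Set.indicator
        {x : Equiv.Perm ((i : Fin l) × Fin (n i)) |
          ∃ m' : Equiv.Perm ((i : Fin l) × Fin (n i)),
            (∀ p, (m' p).1 = p.1) ∧ m' * Equiv.swap a b * m'⁻¹ = x}
        (fun _ => (1 : ℂ)) (m * x * m⁻¹)
      = Set.indicator
        {x : Equiv.Perm ((i : Fin l) × Fin (n i)) |
          ∃ m' : Equiv.Perm ((i : Fin l) × Fin (n i)),
            (∀ p, (m' p).1 = p.1) ∧ m' * Equiv.swap a b * m'⁻¹ = x}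
        (fun _ => (1 : ℂ)) x) ∧
    -- they do not commute under convolution.
    convol
      (Set.indicator
        {x : Equiv.Perm ((i : Fin l) × Fin (n i)) |
          ∃ m : Equiv.Perm ((i : Fin l) × Fin (n i)),
            (∀ p, (m p).1 = p.1) ∧ m * Equiv.swap a b * m⁻¹ = x}
        (fun _ => (1 : ℂ)))
      (Set.indicator
        {x : Equiv.Perm ((i : Fin l) × Fin (n i)) |
          ∃ m : Equiv.Perm ((i : Fin l) × Fin (n i)),
            (∀ p, (m p).1 = p.1) ∧ m * Equiv.swap b c * m⁻¹ = x}
        (fun _ => (1 : ℂ)))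
    ≠
    convol
      (Set.indicator
        {x : Equiv.Perm ((i : Fin l) × Fin (n i)) |
          ∃ m : Equiv.Perm ((i : Fin l) × Fin (n i)),
            (∀ p, (m p).1 = p.1) ∧ m * Equiv.swap b c * m⁻¹ = x}
        (fun _ => (1 : ℂ)))
      (Set.indicator
        {x : Equiv.Perm ((i : Fin l) × Fin (n i)) |
          ∃ m : Equiv.Perm ((i : Fin l) × Fin (n i)),
            (∀ p, (m p).1 = p.1) ∧ m * Equiv.swap a b * m⁻¹ = x}
        (fun _ => (1 : ℂ))) := by
  exact ⟨indicator_conjClassIn_ne_zero (H := blockPerm Sigma.fst) one_ne_zero (swap a b),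
    fun m hm x => indicator_conjClassIn_conj 1 (H := blockPerm Sigma.fst) hm (swap a b) x,
    convol_indicator_conjClassIn_swap_ne (blk := Sigma.fst) hab hbc hac⟩

/-- For `l ≥ 3` blocks, the convolution algebra of `Ad(M')`-invariant functions on
`G' = S_{n₁+⋯+n_l}`, where `M' = S_{n₁} × ⋯ × S_{n_l}` is the block subgroup, is not
commutative: the characteristic functions of the `M'`-conjugacy classes of the
transpositions `σ₁ = (a b)` and `σ₂ = (b c)` (with `a, b, c` in three distinct
blocks) are `Ad(M')`-invariant but do not commute under convolution.
Consequently `(G', M')` is not a strong Gelfand pair. -/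
theorem blocks_not_strong_gelfand
    (l : ℕ) (hl : 3 ≤ l) (n : Fin l → ℕ) (hn : ∀ i, 1 ≤ n i)
    (a b c : (i : Fin l) × Fin (n i))
    (hab : a.1 ≠ b.1) (hbc : b.1 ≠ c.1) (hac : a.1 ≠ c.1) :
    -- `f₁`, `f₂` are the characteristic functions of the `M'`-conjugacy classes of
    -- the transpositions `(a b)` and `(b c)`.
    (Set.indicator
        {x : Equiv.Perm ((i : Fin l) × Fin (n i)) |
          ∃ m : Equiv.Perm ((i : Fin l) × Fin (n i)),
            (∀ p, (m p).1 = p.1) ∧ m * Equiv.swap a b * m⁻¹ = x}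
        (fun _ => (1 : ℂ)) ≠ 0) ∧
    -- they are `Ad(M')`-invariant, and
    (∀ m : Equiv.Perm ((i : Fin l) × Fin (n i)), (∀ p, (m p).1 = p.1) →
      ∀ x, Set.indicator
        {x : Equiv.Perm ((i : Fin l) × Fin (n i)) |
          ∃ m' : Equiv.Perm ((i : Fin l) × Fin (n i)),
            (∀ p, (m' p).1 = p.1) ∧ m' * Equiv.swap a b * m'⁻¹ = x}
        (fun _ => (1 : ℂ)) (m * x * m⁻¹)
      = Set.indicator
        {x : Equiv.Perm ((i : Fin l) × Fin (n i)) |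
          ∃ m' : Equiv.Perm ((i : Fin l) × Fin (n i)),
            (∀ p, (m' p).1 = p.1) ∧ m' * Equiv.swap a b * m'⁻¹ = x}
        (fun _ => (1 : ℂ)) x) ∧
    -- they do not commute under convolution.
    convol
      (Set.indicator
        {x : Equiv.Perm ((i : Fin l) × Fin (n i)) |
          ∃ m : Equiv.Perm ((i : Fin l) × Fin (n i)),
            (∀ p, (m p).1 = p.1) ∧ m * Equiv.swap a b * m⁻¹ = x}
        (fun _ => (1 : ℂ)))
      (Set.indicator
        {x : Equiv.Perm ((i : Fin l) × Fin (n i)) |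
          ∃ m : Equiv.Perm ((i : Fin l) × Fin (n i)),
            (∀ p, (m p).1 = p.1) ∧ m * Equiv.swap b c * m⁻¹ = x}
        (fun _ => (1 : ℂ)))
    ≠
    convol
      (Set.indicator
        {x : Equiv.Perm ((i : Fin l) × Fin (n i)) |
          ∃ m : Equiv.Perm ((i : Fin l) × Fin (n i)),
            (∀ p, (m p).1 = p.1) ∧ m * Equiv.swap b c * m⁻¹ = x}
        (fun _ => (1 : ℂ)))
      (Set.indicator
        {x : Equiv.Perm ((i : Fin l) × Fin (n i)) |
          ∃ m : Equiv.Perm ((i : Fin l) × Fin (n i)),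
            (∀ p, (m p).1 = p.1) ∧ m * Equiv.swap a b * m⁻¹ = x}
        (fun _ => (1 : ℂ))) :=
  blocks_not_strong_gelfand_general l n a b c hab hbc hac
end
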